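/- Description of algebraic curvature tensors: the vector space of algebraic curvature tensors on T equals the linear span of the quadrilinear maps (X,Y,U,V) ↦ (α(X)β(Y) − α(Y)β(X))·(α(U)β(V) − α(V)β(U)) taken over all pairs of linear functionals α, β on T; that is, each such quadrilinear map is an algebraic curvature tensor, and every algebraic curvature tensor is a finite real linear combination of maps of this form. -/

import Mathlib

open scoped BigOperators

variable {T : Type*} [NormedAddCommGroup T] [InnerProductSpace ℝ T] [FiniteDimensional ℝ T]

/-- A map `T → T → T → T → ℝ` that is linear in each of its four arguments. -/
def IsQuadrilinear (R : T → T → T → T → ℝ) : Prop :=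
  (∀ Y U V, IsLinearMap ℝ fun X => R X Y U V) ∧
  (∀ X U V, IsLinearMap ℝ fun Y => R X Y U V) ∧
  (∀ X Y V, IsLinearMap ℝ fun U => R X Y U V) ∧
  (∀ X Y U, IsLinearMap ℝ fun V => R X Y U V)

/-- An algebraic curvature tensor on `T`. -/
def IsAlgCurv (R : T → T → T → T → ℝ) : Prop :=
  IsQuadrilinear R ∧
  (∀ X Y U V : T, R X Y U V = -R Y X U V) ∧
  (∀ X Y U V : T, R X Y U V = -R X Y V U) ∧
  (∀ X Y Z V : T, R X Y Z V + R Y Z X V + R Z X Y V = 0)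

namespace AlgCurvAux

/-- The basic generator. -/
def Ffun (α β : T →ₗ[ℝ] ℝ) : T → T → T → T → ℝ :=
  fun X Y U V => (α X * β Y - α Y * β X) * (α U * β V - α V * β U)

lemma Ffun_isAlgCurv (α β : T →ₗ[ℝ] ℝ) : IsAlgCurv (Ffun α β) := by
  refine ⟨⟨?_, ?_, ?_, ?_⟩, ?_, ?_, ?_⟩
  · exact fun Y U V => ⟨fun a b => by simp [Ffun, map_add]; ring,
      fun c a => by simp [Ffun, map_smul, smul_eq_mul]; ring⟩
  · exact fun X U V => ⟨fun a b => by simp [Ffun, map_add]; ring,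
      fun c a => by simp [Ffun, map_smul, smul_eq_mul]; ring⟩
  · exact fun X Y V => ⟨fun a b => by simp [Ffun, map_add]; ring,
      fun c a => by simp [Ffun, map_smul, smul_eq_mul]; ring⟩
  · exact fun X Y U => ⟨fun a b => by simp [Ffun, map_add]; ring,
      fun c a => by simp [Ffun, map_smul, smul_eq_mul]; ring⟩
  · intro X Y U V; simp only [Ffun]; ring
  · intro X Y U V; simp only [Ffun]; ring
  · intro X Y Z V; simp only [Ffun]; ring

lemma isAlgCurv_zero : IsAlgCurv (0 : T → T → T → T → ℝ) := by
  refine ⟨⟨?_, ?_, ?_, ?_⟩, ?_, ?_, ?_⟩ <;>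
    first
    | exact fun _ _ _ => ⟨fun a b => by simp, fun c a => by simp⟩
    | intro X Y U V <;> simp

lemma isAlgCurv_add {R S : T → T → T → T → ℝ} (hR : IsAlgCurv R) (hS : IsAlgCurv S) :
    IsAlgCurv (R + S) := by
  obtain ⟨⟨q1, q2, q3, q4⟩, a1, a2, a3⟩ := hR
  obtain ⟨⟨p1, p2, p3, p4⟩, b1, b2, b3⟩ := hS
  refine ⟨⟨?_, ?_, ?_, ?_⟩, ?_, ?_, ?_⟩
  · exact fun Y U V => ⟨fun a b => by
      simp only [Pi.add_apply, (q1 Y U V).map_add, (p1 Y U V).map_add]; ring,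
      fun c a => by
      simp only [Pi.add_apply, (q1 Y U V).map_smul, (p1 Y U V).map_smul, smul_eq_mul]; ring⟩
  · exact fun X U V => ⟨fun a b => by
      simp only [Pi.add_apply, (q2 X U V).map_add, (p2 X U V).map_add]; ring,
      fun c a => by
      simp only [Pi.add_apply, (q2 X U V).map_smul, (p2 X U V).map_smul, smul_eq_mul]; ring⟩
  · exact fun X Y V => ⟨fun a b => by
      simp only [Pi.add_apply, (q3 X Y V).map_add, (p3 X Y V).map_add]; ring,
      fun c a => by
      simp only [Pi.add_apply, (q3 X Y V).map_smul, (p3 X Y V).map_smul, smul_eq_mul]; ring⟩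
  · exact fun X Y U => ⟨fun a b => by
      simp only [Pi.add_apply, (q4 X Y U).map_add, (p4 X Y U).map_add]; ring,
      fun c a => by
      simp only [Pi.add_apply, (q4 X Y U).map_smul, (p4 X Y U).map_smul, smul_eq_mul]; ring⟩
  · intro X Y U V; simp only [Pi.add_apply]; linarith [a1 X Y U V, b1 X Y U V]
  · intro X Y U V; simp only [Pi.add_apply]; linarith [a2 X Y U V, b2 X Y U V]
  · intro X Y Z V; simp only [Pi.add_apply]; linarith [a3 X Y Z V, b3 X Y Z V]

lemma isAlgCurv_smul {R : T → T → T → T → ℝ} (c : ℝ) (hR : IsAlgCurv R) :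
    IsAlgCurv (c • R) := by
  obtain ⟨⟨q1, q2, q3, q4⟩, a1, a2, a3⟩ := hR
  refine ⟨⟨?_, ?_, ?_, ?_⟩, ?_, ?_, ?_⟩
  · exact fun Y U V => ⟨fun a b => by
      simp only [Pi.smul_apply, (q1 Y U V).map_add, smul_eq_mul]; ring,
      fun d a => by
      simp only [Pi.smul_apply, (q1 Y U V).map_smul, smul_eq_mul]; ring⟩
  · exact fun X U V => ⟨fun a b => by
      simp only [Pi.smul_apply, (q2 X U V).map_add, smul_eq_mul]; ring,
      fun d a => by
      simp only [Pi.smul_apply, (q2 X U V).map_smul, smul_eq_mul]; ring⟩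
  · exact fun X Y V => ⟨fun a b => by
      simp only [Pi.smul_apply, (q3 X Y V).map_add, smul_eq_mul]; ring,
      fun d a => by
      simp only [Pi.smul_apply, (q3 X Y V).map_smul, smul_eq_mul]; ring⟩
  · exact fun X Y U => ⟨fun a b => by
      simp only [Pi.smul_apply, (q4 X Y U).map_add, smul_eq_mul]; ring,
      fun d a => by
      simp only [Pi.smul_apply, (q4 X Y U).map_smul, smul_eq_mul]; ring⟩
  · intro X Y U V; simp only [Pi.smul_apply, smul_eq_mul]; linear_combination c * a1 X Y U V
  · intro X Y U V; simp only [Pi.smul_apply, smul_eq_mul]; linear_combination c * a2 X Y U V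
  · intro X Y Z V; simp only [Pi.smul_apply, smul_eq_mul]; linear_combination c * a3 X Y Z V

lemma pair_symm {R : T → T → T → T → ℝ} (h : IsAlgCurv R) (X Y U V : T) :
    R X Y U V = R U V X Y := by
  obtain ⟨-, ha, hb, hB⟩ := h
  linarith [hB X Y U V, hB X Y V U, hB X U Y V, hB X U V Y, hB X V Y U, hB X V U Y, hB Y X U V, hB Y X V U, hB Y U X V, hB Y U V X, hB Y V X U, hB Y V U X, hB U X Y V, hB U X V Y, hB U Y X V, hB U Y V X, hB U V X Y, hB U V Y X, hB V X Y U, hB V X U Y, hB V Y X U, hB V Y U X, hB V U X Y, hB V U Y X,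
 ha X Y U V, ha X Y V U, ha X U Y V, ha X U V Y, ha X V Y U, ha X V U Y, ha Y X U V, ha Y X V U, ha Y U X V, ha Y U V X, ha Y V X U, ha Y V U X, ha U X Y V, ha U X V Y, ha U Y X V, ha U Y V X, ha U V X Y, ha U V Y X, ha V X Y U, ha V X U Y, ha V Y X U, ha V Y U X, ha V U X Y, ha V U Y X,
 hb X Y U V, hb X Y V U, hb X U Y V, hb X U V Y, hb X V Y U, hb X V U Y, hb Y X U V, hb Y X V U, hb Y U X V, hb Y U V X, hb Y V X U, hb Y V U X, hb U X Y V, hb U X V Y, hb U Y X V, hb U Y V X, hb U V X Y, hb U V Y X, hb V X Y U, hb V X U Y, hb V Y X U, hb V Y U X, hb V U X Y, hb V U Y X]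

/-- `R X V U Y - R X U V Y = R X Y U V` for algebraic curvature tensors. -/
lemma swap23 {R : T → T → T → T → ℝ} (h : IsAlgCurv R) (X Y U V : T) :
    R X V U Y - R X U V Y = R X Y U V := by
  have h1 := h.2.2.2 X V U Y
  have h2 := pair_symm h V U X Y
  have h3 := h.2.2.1 X Y U V
  have h4 := h.2.1 U X V Y
  linarith

/-- The linear expansion of a linear functional over a basis. -/
lemma lin_expand {n : ℕ} (b : Module.Basis (Fin n) ℝ T) (f : T → ℝ) (hf : IsLinearMap ℝ f) (X : T) :
    f X = ∑ i, b.repr X i * f (b i) := by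
  conv_lhs => rw [← b.sum_repr X]
  rw [show f = ⇑(IsLinearMap.mk' f hf) from rfl, map_sum]
  simp [smul_eq_mul]

lemma quad_expand {n : ℕ} (b : Module.Basis (Fin n) ℝ T) {R : T → T → T → T → ℝ}
    (h : IsQuadrilinear R) (X Y U V : T) :
    R X Y U V = ∑ i, ∑ j, ∑ k, ∑ l,
      b.repr X i * b.repr Y j * b.repr U k * b.repr V l * R (b i) (b j) (b k) (b l) := by
  obtain ⟨h1, h2, h3, h4⟩ := h
  rw [lin_expand b _ (h1 Y U V) X]
  refine Finset.sum_congr rfl fun i _ => ?_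
  rw [lin_expand b _ (h2 (b i) U V) Y, Finset.mul_sum]
  refine Finset.sum_congr rfl fun j _ => ?_
  rw [lin_expand b _ (h3 (b i) (b j) V) U, Finset.mul_sum, Finset.mul_sum]
  refine Finset.sum_congr rfl fun k _ => ?_
  rw [lin_expand b _ (h4 (b i) (b j) (b k)) V, Finset.mul_sum, Finset.mul_sum, Finset.mul_sum]
  exact Finset.sum_congr rfl fun l _ => by ring

lemma quad_expand' {n : ℕ} (b : Module.Basis (Fin n) ℝ T) {R : T → T → T → T → ℝ}
    (h : IsQuadrilinear R) (X Y U V : T) :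
    ∑ p : Fin n × Fin n × Fin n × Fin n,
      b.repr X p.1 * b.repr Y p.2.1 * b.repr U p.2.2.1 * b.repr V p.2.2.2 *
        R (b p.1) (b p.2.1) (b p.2.2.1) (b p.2.2.2) = R X Y U V := by
  simp only [Fintype.sum_prod_type]
  exact (quad_expand b h X Y U V).symm

/-- polarized generator -/
def Hfun (a₁ a₂ b₁ b₂ : T →ₗ[ℝ] ℝ) : T → T → T → T → ℝ :=
  Ffun (a₁ + a₂) (b₁ + b₂) - Ffun a₁ (b₁ + b₂) - Ffun a₂ (b₁ + b₂)
    - Ffun (a₁ + a₂) b₁ + Ffun a₁ b₁ + Ffun a₂ b₁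
    - Ffun (a₁ + a₂) b₂ + Ffun a₁ b₂ + Ffun a₂ b₂

lemma Hfun_apply (a₁ a₂ b₁ b₂ : T →ₗ[ℝ] ℝ) (X Y U V : T) :
    Hfun a₁ a₂ b₁ b₂ X Y U V =
      (a₁ X * b₁ Y - a₁ Y * b₁ X) * (a₂ U * b₂ V - a₂ V * b₂ U) +
      (a₁ X * b₂ Y - a₁ Y * b₂ X) * (a₂ U * b₁ V - a₂ V * b₁ U) +
      (a₂ X * b₁ Y - a₂ Y * b₁ X) * (a₁ U * b₂ V - a₁ V * b₂ U) +
      (a₂ X * b₂ Y - a₂ Y * b₂ X) * (a₁ U * b₁ V - a₁ V * b₁ U) := by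
  simp only [Hfun, Ffun, Pi.add_apply, Pi.sub_apply, LinearMap.add_apply]
  ring

lemma Hfun_mem (a₁ a₂ b₁ b₂ : T →ₗ[ℝ] ℝ) :
    Hfun a₁ a₂ b₁ b₂ ∈ Submodule.span ℝ
      {f : T → T → T → T → ℝ | ∃ α β : T →ₗ[ℝ] ℝ,
        f = fun X Y U V => (α X * β Y - α Y * β X) * (α U * β V - α V * β U)} := by
  have hF : ∀ α β : T →ₗ[ℝ] ℝ, Ffun α β ∈ Submodule.span ℝ
      {f : T → T → T → T → ℝ | ∃ α β : T →ₗ[ℝ] ℝ,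
        f = fun X Y U V => (α X * β Y - α Y * β X) * (α U * β V - α V * β U)} :=
    fun α β => Submodule.subset_span ⟨α, β, rfl⟩
  unfold Hfun
  exact Submodule.add_mem _ (Submodule.add_mem _ (Submodule.sub_mem _ (Submodule.add_mem _
    (Submodule.add_mem _ (Submodule.sub_mem _ (Submodule.sub_mem _ (Submodule.sub_mem _
      (hF _ _) (hF _ _)) (hF _ _)) (hF _ _)) (hF _ _)) (hF _ _)) (hF _ _)) (hF _ _)) (hF _ _)

lemma mem_span_of_isAlgCurv {R : T → T → T → T → ℝ} (h : IsAlgCurv R) :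
    R ∈ Submodule.span ℝ
      {f : T → T → T → T → ℝ | ∃ α β : T →ₗ[ℝ] ℝ,
        f = fun X Y U V => (α X * β Y - α Y * β X) * (α U * β V - α V * β U)} := by
  classical
  set n := Module.finrank ℝ T with hn
  let b : Module.Basis (Fin n) ℝ T := Module.finBasis ℝ T
  set c : Fin n × Fin n × Fin n × Fin n → ℝ :=
    fun p => R (b p.1) (b p.2.1) (b p.2.2.1) (b p.2.2.2) with hc
  set H : Fin n × Fin n × Fin n × Fin n → (T → T → T → T → ℝ) :=
    fun p => Hfun (b.coord p.1) (b.coord p.2.2.1) (b.coord p.2.1) (b.coord p.2.2.2) with hH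
  have key : ∀ X Y U V : T, ∑ p : Fin n × Fin n × Fin n × Fin n,
      c p * H p X Y U V = 12 * R X Y U V := by
    intro X Y U V
    have split : ∀ p : Fin n × Fin n × Fin n × Fin n, c p * H p X Y U V =
        (b.repr X p.1 * b.repr Y p.2.1 * b.repr U p.2.2.1 * b.repr V p.2.2.2 *
          R (b p.1) (b p.2.1) (b p.2.2.1) (b p.2.2.2) -
         b.repr X p.1 * b.repr Y p.2.1 * b.repr V p.2.2.1 * b.repr U p.2.2.2 *
          R (b p.1) (b p.2.1) (b p.2.2.1) (b p.2.2.2) -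
         b.repr Y p.1 * b.repr X p.2.1 * b.repr U p.2.2.1 * b.repr V p.2.2.2 *
          R (b p.1) (b p.2.1) (b p.2.2.1) (b p.2.2.2) +
         b.repr Y p.1 * b.repr X p.2.1 * b.repr V p.2.2.1 * b.repr U p.2.2.2 *
          R (b p.1) (b p.2.1) (b p.2.2.1) (b p.2.2.2)) +
        (b.repr X p.1 * b.repr V p.2.1 * b.repr U p.2.2.1 * b.repr Y p.2.2.2 *
          R (b p.1) (b p.2.1) (b p.2.2.1) (b p.2.2.2) -
         b.repr X p.1 * b.repr U p.2.1 * b.repr V p.2.2.1 * b.repr Y p.2.2.2 *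
          R (b p.1) (b p.2.1) (b p.2.2.1) (b p.2.2.2) -
         b.repr Y p.1 * b.repr V p.2.1 * b.repr U p.2.2.1 * b.repr X p.2.2.2 *
          R (b p.1) (b p.2.1) (b p.2.2.1) (b p.2.2.2) +
         b.repr Y p.1 * b.repr U p.2.1 * b.repr V p.2.2.1 * b.repr X p.2.2.2 *
          R (b p.1) (b p.2.1) (b p.2.2.1) (b p.2.2.2)) +
        (b.repr U p.1 * b.repr Y p.2.1 * b.repr X p.2.2.1 * b.repr V p.2.2.2 *
          R (b p.1) (b p.2.1) (b p.2.2.1) (b p.2.2.2) -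
         b.repr V p.1 * b.repr Y p.2.1 * b.repr X p.2.2.1 * b.repr U p.2.2.2 *
          R (b p.1) (b p.2.1) (b p.2.2.1) (b p.2.2.2) -
         b.repr U p.1 * b.repr X p.2.1 * b.repr Y p.2.2.1 * b.repr V p.2.2.2 *
          R (b p.1) (b p.2.1) (b p.2.2.1) (b p.2.2.2) +
         b.repr V p.1 * b.repr X p.2.1 * b.repr Y p.2.2.1 * b.repr U p.2.2.2 *
          R (b p.1) (b p.2.1) (b p.2.2.1) (b p.2.2.2)) +
        (b.repr U p.1 * b.repr V p.2.1 * b.repr X p.2.2.1 * b.repr Y p.2.2.2 *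
          R (b p.1) (b p.2.1) (b p.2.2.1) (b p.2.2.2) -
         b.repr V p.1 * b.repr U p.2.1 * b.repr X p.2.2.1 * b.repr Y p.2.2.2 *
          R (b p.1) (b p.2.1) (b p.2.2.1) (b p.2.2.2) -
         b.repr U p.1 * b.repr V p.2.1 * b.repr Y p.2.2.1 * b.repr X p.2.2.2 *
          R (b p.1) (b p.2.1) (b p.2.2.1) (b p.2.2.2) +
         b.repr V p.1 * b.repr U p.2.1 * b.repr Y p.2.2.1 * b.repr X p.2.2.2 *
          R (b p.1) (b p.2.1) (b p.2.2.1) (b p.2.2.2)) := by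
      intro p
      simp only [hc, hH, Hfun_apply, Module.Basis.coord_apply]
      ring
    rw [Finset.sum_congr rfl fun p _ => split p]
    simp only [Finset.sum_add_distrib, Finset.sum_sub_distrib]
    rw [quad_expand' b h.1 X Y U V, quad_expand' b h.1 X Y V U, quad_expand' b h.1 Y X U V,
      quad_expand' b h.1 Y X V U, quad_expand' b h.1 X V U Y, quad_expand' b h.1 X U V Y,
      quad_expand' b h.1 Y V U X, quad_expand' b h.1 Y U V X, quad_expand' b h.1 U Y X V,
      quad_expand' b h.1 V Y X U, quad_expand' b h.1 U X Y V, quad_expand' b h.1 V X Y U,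
      quad_expand' b h.1 U V X Y, quad_expand' b h.1 V U X Y, quad_expand' b h.1 U V Y X,
      quad_expand' b h.1 V U Y X]
    have ha := h.2.1
    have hb := h.2.2.1
    have hp := fun A B C D => pair_symm h A B C D
    have hs := fun A B C D => swap23 h A B C D
    linarith [hb X Y U V, ha X Y U V, ha X Y V U, hs X Y U V, hs Y X U V,
      hp U Y X V, hp V Y X U, hp U X Y V, hp V X Y U,
      hp U V X Y, ha U V X Y, ha U V Y X, hb U V X Y,
      hp V U X Y, hp U V Y X, hp V U Y X, ha X Y U V]
  have hrep : R = (12 : ℝ)⁻¹ • ∑ p : Fin n × Fin n × Fin n × Fin n, c p • H p := by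
    funext X Y U V
    have := key X Y U V
    simp only [Pi.smul_apply, Finset.sum_apply, smul_eq_mul]
    rw [show (∑ p : Fin n × Fin n × Fin n × Fin n, c p * H p X Y U V) = 12 * R X Y U V from this]
    ring
  rw [hrep]
  exact Submodule.smul_mem _ _ (Submodule.sum_smul_mem _ _ fun p _ => Hfun_mem _ _ _ _)

end AlgCurvAux

theorem algCurv_eq_span :
    {R : T → T → T → T → ℝ | IsAlgCurv R} =
      ↑(Submodule.span ℝ
        {f : T → T → T → T → ℝ | ∃ α β : T →ₗ[ℝ] ℝ,
          f = fun X Y U V => (α X * β Y - α Y * β X) * (α U * β V - α V * β U)}) := by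
  apply Set.Subset.antisymm
  · intro R hR
    exact AlgCurvAux.mem_span_of_isAlgCurv hR
  · intro R hR
    refine Submodule.span_induction (p := fun f _ => IsAlgCurv f) ?_ ?_ ?_ ?_ hR
    · rintro f ⟨α, β, rfl⟩
      exact AlgCurvAux.Ffun_isAlgCurv α β
    · exact AlgCurvAux.isAlgCurv_zero
    · exact fun f g _ _ hf hg => AlgCurvAux.isAlgCurv_add hf hg
    · exact fun a f _ hf => AlgCurvAux.isAlgCurv_smul a hf
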